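/- Let C ⊆ S²_B Λ²ℝⁿ (n ≥ 4) be a curvature cone containing a nonzero element of S²₀ℝⁿ∧id (the traceless-Ricci part, i.e., conformally flat scalar flat operators). Then S²₀ℝⁿ∧id ⊆ C. -/

import Mathlib

open Matrix

noncomputable section

/-- The ambient space of 4-tensors on ℝⁿ; a curvature operator R on Λ²ℝⁿ is recorded
by its components R i j k l = ⟨R(eᵢ∧eⱼ), eₖ∧eₗ⟩. -/
abbrev Tn (n : ℕ) : Type := Fin n → Fin n → Fin n → Fin n → ℝ

/-- The space S²_BΛ²ℝⁿ of algebraic curvature operators: symmetric endomorphisms of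
Λ²ℝⁿ (antisymmetry in the first and last pairs, symmetry in exchanging the pairs)
satisfying the first Bianchi identity. -/
def CurvOp (n : ℕ) : Submodule ℝ (Tn n) where
  carrier := {R | (∀ i j k l, R j i k l = -R i j k l) ∧
    (∀ i j k l, R i j l k = -R i j k l) ∧
    (∀ i j k l, R k l i j = R i j k l) ∧
    (∀ i j k l, R i j k l + R k i j l + R j k i l = 0)}
  add_mem' := by
    rintro a b ⟨ha1, ha2, ha3, ha4⟩ ⟨hb1, hb2, hb3, hb4⟩
    refine ⟨fun i j k l => ?_, fun i j k l => ?_, fun i j k l => ?_, fun i j k l => ?_⟩ <;>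
      simp only [Pi.add_apply]
    · linear_combination ha1 i j k l + hb1 i j k l
    · linear_combination ha2 i j k l + hb2 i j k l
    · linear_combination ha3 i j k l + hb3 i j k l
    · linear_combination ha4 i j k l + hb4 i j k l
  zero_mem' := ⟨fun _ _ _ _ => by simp, fun _ _ _ _ => by simp,
    fun _ _ _ _ => by simp, fun _ _ _ _ => by simp⟩
  smul_mem' := by
    rintro c a ⟨ha1, ha2, ha3, ha4⟩
    refine ⟨fun i j k l => ?_, fun i j k l => ?_, fun i j k l => ?_, fun i j k l => ?_⟩ <;>
      simp only [Pi.smul_apply, smul_eq_mul]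
    · linear_combination c * ha1 i j k l
    · linear_combination c * ha2 i j k l
    · linear_combination c * ha3 i j k l
    · linear_combination c * ha4 i j k l

/-- The action of g ∈ O(n) on curvature operators:
(g·R) i j k l = ⟨R(geᵢ∧geⱼ), geₖ∧geₗ⟩. -/
def act {n : ℕ} (g : Matrix (Fin n) (Fin n) ℝ) (R : Tn n) : Tn n :=
  fun i j k l => ∑ a, ∑ b, ∑ c, ∑ d, R a b c d * g a i * g b j * g c k * g d l

/-- The trace of a curvature operator (as an endomorphism of Λ²ℝⁿ); the scalar
curvature is twice this. -/
def trT {n : ℕ} (R : Tn n) : ℝ := (∑ i, ∑ j, R i j i j) / 2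

/-- The identity operator Id of Λ²ℝⁿ, as a 4-tensor. -/
def IdT (n : ℕ) : Tn n := fun i j k l =>
  (if i = k then (1 : ℝ) else 0) * (if j = l then 1 else 0)
    - (if i = l then (1 : ℝ) else 0) * (if j = k then 1 else 0)

/-- The Ricci tensor of a curvature operator. -/
def ricT {n : ℕ} (R : Tn n) (i k : Fin n) : ℝ := ∑ j, R i j k j

/-- The Weyl space W: curvature operators with vanishing Ricci tensor. -/
def WeylSet (n : ℕ) : Set (Tn n) :=
  {R | R ∈ CurvOp n ∧ ∀ i k, ricT R i k = 0}

/-- The tensor of A∧B, (A∧B)(x∧y) = (1/2)(Ax∧By + Bx∧Ay), for symmetric matrices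
A, B. -/
def wedgeT {n : ℕ} (A B : Matrix (Fin n) (Fin n) ℝ) : Tn n := fun i j k l =>
  (A k i * B l j - A l i * B k j + B k i * A l j - B l i * A k j) / 2

/-- The space S²₀ℝⁿ∧id of curvature operators A₀∧id with A₀ traceless symmetric
(equivalently: conformally flat scalar flat curvature operators). -/
def S20Set (n : ℕ) : Set (Tn n) :=
  {R | ∃ A : Matrix (Fin n) (Fin n) ℝ, Aᵀ = A ∧ A.trace = 0 ∧ R = wedgeT A 1}

/-- A curvature cone: a closed convex cone C ⊆ S²_BΛ²ℝⁿ, invariant under the action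
of O(n), with Id in its interior (interior relative to S²_BΛ²ℝⁿ). -/
def IsCurvCone (n : ℕ) (C : Set (Tn n)) : Prop :=
  C ⊆ (CurvOp n : Set (Tn n)) ∧ IsClosed C ∧ Convex ℝ C ∧
    (∀ x ∈ C, ∀ r : ℝ, 0 ≤ r → r • x ∈ C) ∧
    (∀ g : Matrix (Fin n) (Fin n) ℝ, g * gᵀ = 1 → gᵀ * g = 1 →
      ∀ R ∈ C, act g R ∈ C) ∧
    (∃ ε > (0 : ℝ), ∀ R ∈ CurvOp n, ‖R - IdT n‖ < ε → R ∈ C)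

/-!
By the spectral theorem and `O(n)`-invariance, whether `A ∧ id` lies in `C` depends only on the
eigenvalues of `A`, so everything reduces to the cone `S ⊆ ℝⁿ` of those `d` with
`diag(d) ∧ id ∈ C`, a convex cone invariant under permutations of the coordinates. For `d ∈ S` with
zero sum, the other cyclic shifts of `d` add up to `-d`, so `d` lies in the lineality space
`S ∩ -S`. This is a permutation-invariant subspace, and since the permutation representation on
zero-sum vectors is irreducible, it contains all of them as soon as it contains a nonzero one.
-/

lemma exists_ne_of_sum_eq_zero {𝕜 ι : Type*} [Fintype ι] [Field 𝕜] [CharZero 𝕜] {v : ι → 𝕜}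
    (hv : ∑ i, v i = 0) (hne : v ≠ 0) : ∃ i j, v i ≠ v j := by
  by_contra! hconst
  obtain ⟨i, hi⟩ := Function.ne_iff.mp hne
  have : Nonempty ι := ⟨i⟩
  have : (Fintype.card ι : 𝕜) * v i = 0 := by simpa [hconst _ i] using hv
  simp_all [Fintype.card_ne_zero]

lemma comp_swap_sub_self {𝕜 ι : Type*} [Ring 𝕜] [DecidableEq ι] (v : ι → 𝕜) {i j : ι}
    (hij : i ≠ j) : v ∘ Equiv.swap i j - v = (v j - v i) • (Pi.single i 1 - Pi.single j 1) := by
  ext x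
  rcases eq_or_ne x i with rfl | hxi
  · simp [hij]
  rcases eq_or_ne x j with rfl | hxj
  · simp [hxi]
  · simp [Equiv.swap_apply_of_ne_of_ne hxi hxj, hxi, hxj]

lemma Submodule.mem_of_sum_eq_zero_of_perm_invariant {𝕜 ι : Type*} [Fintype ι] [DecidableEq ι]
    [Field 𝕜] [CharZero 𝕜] (W : Submodule 𝕜 (ι → 𝕜))
    (hW : ∀ x ∈ W, ∀ σ : Equiv.Perm ι, x ∘ σ ∈ W) {v : ι → 𝕜} (hvW : v ∈ W)
    (hv : ∑ i, v i = 0) (hne : v ≠ 0) {w : ι → 𝕜} (hw : ∑ i, w i = 0) : w ∈ W := by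
  obtain ⟨i, j, hij⟩ := exists_ne_of_sum_eq_zero hv hne
  have hij' : i ≠ j := ne_of_apply_ne v hij
  have hbase : Pi.single i 1 - Pi.single j 1 ∈ W := by
    have h := W.sub_mem (hW v hvW (Equiv.swap i j)) hvW
    rw [comp_swap_sub_self v hij'] at h
    simpa [sub_ne_zero.mpr hij.symm] using W.smul_mem (v j - v i)⁻¹ h
  have hall : ∀ k, Pi.single k 1 - Pi.single i 1 ∈ W := by
    intro k
    rcases eq_or_ne k i with rfl | hki
    · simp
    have h := hW _ hbase (Equiv.swap j k)
    rw [Pi.sub_comp, Pi.single_comp_equiv, Pi.single_comp_equiv] at h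
    simpa [Equiv.swap_apply_of_ne_of_ne hij' hki.symm] using W.neg_mem h
  have hdecomp : ∑ k, w k • (Pi.single k 1 - Pi.single i 1) = w := by
    simp only [smul_sub, Finset.sum_sub_distrib, ← Finset.sum_smul, hw, zero_smul, sub_zero]
    exact (pi_eq_sum_univ' w).symm
  exact hdecomp ▸ W.sum_mem fun k _ => W.smul_mem _ (hall k)

lemma PointedCone.neg_mem_of_sum_eq_zero {𝕜 : Type*} [Ring 𝕜] [PartialOrder 𝕜] [IsOrderedRing 𝕜]
    {n : ℕ} (K : PointedCone 𝕜 (Fin n → 𝕜)) (hK : ∀ x ∈ K, ∀ σ : Equiv.Perm (Fin n), x ∘ σ ∈ K)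
    {v : Fin n → 𝕜} (hvK : v ∈ K) (hv : ∑ i, v i = 0) : -v ∈ K := by
  cases n with
  | zero => simpa [Subsingleton.elim v 0] using K.zero_mem
  | succ n =>
    -- the cyclic shifts of `v` add up to the constant vector `∑ i, v i = 0`
    have hshifts : ∑ j, v ∘ Equiv.addRight j = 0 := by
      ext k
      simpa [Finset.sum_apply] using (Equiv.sum_comp (Equiv.addLeft k) v).trans hv
    have hrest : v + ∑ j ∈ Finset.univ.erase 0, v ∘ Equiv.addRight j = 0 := by
      rw [← hshifts, ← Finset.add_sum_erase _ _ (Finset.mem_univ 0)]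
      simp
    rw [neg_eq_of_add_eq_zero_right hrest]
    exact K.sum_mem fun j _ => hK v hvK _

lemma PointedCone.mem_of_sum_eq_zero_of_perm_invariant {𝕜 : Type*} [Field 𝕜] [LinearOrder 𝕜]
    [IsStrictOrderedRing 𝕜] {n : ℕ} (K : PointedCone 𝕜 (Fin n → 𝕜))
    (hK : ∀ x ∈ K, ∀ σ : Equiv.Perm (Fin n), x ∘ σ ∈ K) {v : Fin n → 𝕜} (hvK : v ∈ K)
    (hv : ∑ i, v i = 0) (hne : v ≠ 0) {w : Fin n → 𝕜} (hw : ∑ i, w i = 0) : w ∈ K :=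
  K.lineal_le <| K.lineal.mem_of_sum_eq_zero_of_perm_invariant
    (fun x hx σ => ⟨hK x hx.1 σ, hK _ hx.2 σ⟩)
    ⟨hvK, K.neg_mem_of_sum_eq_zero hK hvK hv⟩ hv hne hw

lemma conj_apply_mul_conj_apply {ι R : Type*} [Fintype ι] [CommSemiring R]
    (g M N : Matrix ι ι R) (p q r s : ι) :
    (gᵀ * M * g) p q * (gᵀ * N * g) r s
      = ∑ a, ∑ b, ∑ c, ∑ d, M c a * N d b * g a q * g b s * g c p * g d r := by
  have hconj (X : Matrix ι ι R) (i j : ι) :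
      (gᵀ * X * g) i j = ∑ a, ∑ c, g c i * X c a * g a j := by
    simp only [mul_apply, transpose_apply, Finset.sum_mul]
  rw [hconj, hconj, Finset.sum_mul_sum]
  refine Finset.sum_congr rfl fun a _ => Finset.sum_congr rfl fun b _ => ?_
  rw [Finset.sum_mul_sum]
  refine Finset.sum_congr rfl fun c _ => Finset.sum_congr rfl fun d _ => ?_
  ring

lemma conj_apply_mul_conj_apply' {ι R : Type*} [Fintype ι] [CommSemiring R]
    (g M N : Matrix ι ι R) (p q r s : ι) :
    (gᵀ * M * g) p q * (gᵀ * N * g) r s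
      = ∑ a, ∑ b, ∑ c, ∑ d, M d a * N c b * g a q * g b s * g c r * g d p := by
  rw [conj_apply_mul_conj_apply]
  refine Finset.sum_congr rfl fun a _ => Finset.sum_congr rfl fun b _ => ?_
  rw [Finset.sum_comm]
  refine Finset.sum_congr rfl fun c _ => Finset.sum_congr rfl fun d _ => ?_
  ring

lemma transpose_permMatrix_mul_diagonal_mul_permMatrix {ι R : Type*} [Fintype ι] [DecidableEq ι]
    [NonAssocSemiring R] (σ : Equiv.Perm ι) (d : ι → R) :
    (σ.permMatrix R)ᵀ * diagonal d * σ.permMatrix R = diagonal (d ∘ ⇑σ⁻¹) := by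
  rw [transpose_permMatrix, PEquiv.toMatrix_toPEquiv_mul, PEquiv.mul_toMatrix_toPEquiv]
  exact submatrix_diagonal_equiv d σ⁻¹

lemma transpose_permMatrix_mul_permMatrix {ι R : Type*} [Fintype ι] [DecidableEq ι]
    [NonAssocSemiring R] (σ : Equiv.Perm ι) : (σ.permMatrix R)ᵀ * σ.permMatrix R = 1 := by
  rw [transpose_permMatrix, ← permMatrix_mul, mul_inv_cancel, permMatrix_one]

lemma act_wedgeT {n : ℕ} (g A B : Matrix (Fin n) (Fin n) ℝ) :
    act g (wedgeT A B) = wedgeT (gᵀ * A * g) (gᵀ * B * g) := by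
  ext i j k l
  simp only [act, wedgeT]
  rw [conj_apply_mul_conj_apply g A B k i l j, conj_apply_mul_conj_apply' g A B l i k j,
    conj_apply_mul_conj_apply g B A k i l j, conj_apply_mul_conj_apply' g B A l i k j]
  simp only [← Finset.sum_sub_distrib, ← Finset.sum_add_distrib, Finset.sum_div]
  refine Finset.sum_congr rfl fun a _ => Finset.sum_congr rfl fun b _ => ?_
  refine Finset.sum_congr rfl fun c _ => Finset.sum_congr rfl fun d _ => ?_
  ring

def wedgeOne (n : ℕ) : Matrix (Fin n) (Fin n) ℝ →ₗ[ℝ] Tn n where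
  toFun A := wedgeT A 1
  map_add' A B := by
    ext i j k l
    simp only [wedgeT, Matrix.add_apply, Pi.add_apply]
    ring
  map_smul' r A := by
    ext i j k l
    simp only [wedgeT, Matrix.smul_apply, Pi.smul_apply, smul_eq_mul, RingHom.id_apply]
    ring

lemma act_wedgeOne {n : ℕ} {g : Matrix (Fin n) (Fin n) ℝ} (hg : gᵀ * g = 1)
    (A : Matrix (Fin n) (Fin n) ℝ) : act g (wedgeOne n A) = wedgeOne n (gᵀ * A * g) := by
  simp only [wedgeOne, LinearMap.coe_mk, AddHom.coe_mk, act_wedgeT, Matrix.mul_one, hg]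

namespace IsCurvCone

variable {n : ℕ} {C : Set (Tn n)}

lemma smul_mem (hC : IsCurvCone n C) {x : Tn n} (hx : x ∈ C) {r : ℝ} (hr : 0 ≤ r) : r • x ∈ C :=
  hC.2.2.2.1 x hx r hr

lemma act_mem (hC : IsCurvCone n C) {g : Matrix (Fin n) (Fin n) ℝ} (hg : gᵀ * g = 1) {R : Tn n}
    (hR : R ∈ C) : act g R ∈ C :=
  hC.2.2.2.2.1 g (mul_eq_one_comm.mp hg) hg R hR

lemma add_mem (hC : IsCurvCone n C) {x y : Tn n} (hx : x ∈ C) (hy : y ∈ C) : x + y ∈ C := by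
  have hmid := hC.2.2.1 hx hy (by norm_num : (0 : ℝ) ≤ 1 / 2) (by norm_num : (0 : ℝ) ≤ 1 / 2)
    (by norm_num)
  convert hC.smul_mem hmid (by norm_num : (0 : ℝ) ≤ 2) using 1
  module

def toPointedCone (hC : IsCurvCone n C) (h0 : (0 : Tn n) ∈ C) : PointedCone ℝ (Tn n) where
  carrier := C
  zero_mem' := h0
  add_mem' := hC.add_mem
  smul_mem' c _ hx := hC.smul_mem hx c.2

lemma wedgeOne_conj_mem (hC : IsCurvCone n C) {g : Matrix (Fin n) (Fin n) ℝ} (hg : gᵀ * g = 1)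
    {A : Matrix (Fin n) (Fin n) ℝ} (hA : wedgeOne n A ∈ C) : wedgeOne n (gᵀ * A * g) ∈ C :=
  act_wedgeOne hg A ▸ hC.act_mem hg hA

lemma wedgeOne_conj_mem_iff (hC : IsCurvCone n C) {g : Matrix (Fin n) (Fin n) ℝ}
    (hg : gᵀ * g = 1) {A : Matrix (Fin n) (Fin n) ℝ} :
    wedgeOne n (gᵀ * A * g) ∈ C ↔ wedgeOne n A ∈ C := by
  refine ⟨fun h => ?_, hC.wedgeOne_conj_mem hg⟩
  have hg' : g * gᵀ = 1 := mul_eq_one_comm.mp hg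
  have h' := hC.wedgeOne_conj_mem (g := gᵀ) (by rwa [transpose_transpose]) h
  rwa [transpose_transpose, ← Matrix.mul_assoc, ← Matrix.mul_assoc, hg', Matrix.one_mul,
    Matrix.mul_assoc, hg', Matrix.mul_one] at h'

lemma wedgeOne_diagonal_comp_perm_mem (hC : IsCurvCone n C) {d : Fin n → ℝ}
    (hd : wedgeOne n (diagonal d) ∈ C) (σ : Equiv.Perm (Fin n)) :
    wedgeOne n (diagonal (d ∘ σ)) ∈ C := by
  have h := hC.wedgeOne_conj_mem (transpose_permMatrix_mul_permMatrix σ⁻¹) hd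
  rwa [transpose_permMatrix_mul_diagonal_mul_permMatrix, inv_inv] at h

lemma wedgeOne_mem_iff_eigenvalues (hC : IsCurvCone n C) {A : Matrix (Fin n) (Fin n) ℝ}
    (hA : A.IsHermitian) : wedgeOne n A ∈ C ↔ wedgeOne n (diagonal hA.eigenvalues) ∈ C := by
  let U : Matrix (Fin n) (Fin n) ℝ := hA.eigenvectorUnitary
  have hstar : star U = Uᵀ := by simp [star_eq_conjTranspose]
  have hU : Uᵀ * U = 1 := hstar ▸ Unitary.coe_star_mul_self hA.eigenvectorUnitary
  have hdiag : Uᵀ * A * U = diagonal hA.eigenvalues := by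
    rw [← hstar]
    simpa [Unitary.conjStarAlgAut_star_apply] using hA.conjStarAlgAut_star_eigenvectorUnitary
  rw [← hC.wedgeOne_conj_mem_iff hU, hdiag]

end IsCurvCone

theorem stmt17_general (n : ℕ) (C : Set (Tn n)) (hC : IsCurvCone n C)
    (R₀ : Tn n) (hR₀C : R₀ ∈ C) (hR₀ : R₀ ∈ S20Set n) (hne : R₀ ≠ 0) :
    S20Set n ⊆ C := by
  have h0 : (0 : Tn n) ∈ C := by simpa using hC.smul_mem hR₀C le_rfl
  let S := (hC.toPointedCone h0).comap (wedgeOne n ∘ₗ diagonalLinearMap (Fin n) ℝ ℝ)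
  have hS : ∀ d ∈ S, ∀ σ : Equiv.Perm (Fin n), d ∘ σ ∈ S :=
    fun _ hd σ => hC.wedgeOne_diagonal_comp_perm_mem hd σ
  obtain ⟨A₀, hA₀, htr₀, rfl⟩ := hR₀
  rintro _ ⟨A, hA, htr, rfl⟩
  replace hA₀ : A₀.IsHermitian := isHermitian_iff_isSymm.mpr hA₀
  replace hA : A.IsHermitian := isHermitian_iff_isSymm.mpr hA
  refine (hC.wedgeOne_mem_iff_eigenvalues hA).mpr <| S.mem_of_sum_eq_zero_of_perm_invariant hS
    ((hC.wedgeOne_mem_iff_eigenvalues hA₀).mp hR₀C) ?_ ?_ ?_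
  · simpa [hA₀.trace_eq_sum_eigenvalues] using htr₀
  · rw [Ne, hA₀.eigenvalues_eq_zero_iff]
    rintro rfl
    exact hne (map_zero (wedgeOne n))
  · simpa [hA.trace_eq_sum_eigenvalues] using htr

/-- Let C ⊆ S²_BΛ²ℝⁿ (n ≥ 4) be a curvature cone containing a nonzero
element of S²₀ℝⁿ∧id (the traceless-Ricci part, i.e. conformally flat scalar flat
curvature operators).  Then S²₀ℝⁿ∧id ⊆ C. -/
theorem stmt17 (n : ℕ) (hn : 4 ≤ n) (C : Set (Tn n)) (hC : IsCurvCone n C)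
    (R₀ : Tn n) (hR₀C : R₀ ∈ C) (hR₀ : R₀ ∈ S20Set n) (hne : R₀ ≠ 0) :
    S20Set n ⊆ C :=
  stmt17_general n C hC R₀ hR₀C hR₀ hne
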